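/- arXiv:2104.02190 — 2 statements merged into one kernel-verified Lean document; each statement's English description precedes it below -/
import Mathlib

section
/- Let F : E → E be a skew-adjoint linear endomorphism of a 2-dimensional real inner-product space with F ≠ 0. Then (F / √(−tr(F²)/2))² = −I, i.e. F normalized by √(−tr(F²)/2) is a complex structure on E. -/
open RealInnerProductSpace

/-- A nonzero skew-adjoint endomorphism `F` of a 2-dimensional real
inner-product space, normalized by `√(-tr(F²)/2)`, is a complex structure:
`(F / √(-tr(F²)/2))² = -I`. -/
theorem stmt_2 {E : Type*} [NormedAddCommGroup E] [InnerProductSpace ℝ E]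
    [FiniteDimensional ℝ E] (hdim : Module.finrank ℝ E = 2)
    (F : E →ₗ[ℝ] E)
    (hskew : ∀ v w : E, ⟪F v, w⟫ = -⟪v, F w⟫)
    (hne : F ≠ 0) :
    ((Real.sqrt (-(LinearMap.trace ℝ E (F ∘ₗ F)) / 2))⁻¹ • F) ∘ₗ
      ((Real.sqrt (-(LinearMap.trace ℝ E (F ∘ₗ F)) / 2))⁻¹ • F)
      = -(LinearMap.id : E →ₗ[ℝ] E) := by
  let b : OrthonormalBasis (Fin 2) ℝ E :=
    (stdOrthonormalBasis ℝ E).reindex (finCongr hdim)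
  have hdiag : ∀ v : E, ⟪v, F v⟫ = 0 := by
    intro v
    have h := hskew v v
    have h2 := real_inner_comm v (F v)
    linarith
  set a : ℝ := ⟪b 0, F (b 1)⟫ with ha
  have h01 : ⟪b 1, F (b 0)⟫ = -a := by
    rw [real_inner_comm, hskew, ha, real_inner_comm]
  have hF0 : F (b 0) = (-a) • b 1 := by
    have := b.sum_repr' (F (b 0))
    rw [Fin.sum_univ_two] at this
    rw [← this, hdiag (b 0), h01]
    simp
  have hF1 : F (b 1) = a • b 0 := by
    have := b.sum_repr' (F (b 1))
    rw [Fin.sum_univ_two] at this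
    rw [← this, hdiag (b 1), ← ha]
    simp
  have hane : a ≠ 0 := by
    intro h0
    apply hne
    apply b.toBasis.ext
    intro i
    fin_cases i <;> simp [hF0, hF1, h0]
  have hF2 : F ∘ₗ F = (-(a * a)) • (LinearMap.id : E →ₗ[ℝ] E) := by
    apply b.toBasis.ext
    intro i
    fin_cases i <;>
      simp [hF0, hF1, map_smul, smul_smul, mul_comm]
  have htr : LinearMap.trace ℝ E (F ∘ₗ F) = -(a * a) * 2 := by
    rw [hF2, map_smul, LinearMap.trace_id, hdim]
    norm_num
  have hsqrt : Real.sqrt (-(LinearMap.trace ℝ E (F ∘ₗ F)) / 2) = |a| := by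
    rw [htr]
    have : -(-(a * a) * 2) / 2 = a ^ 2 := by ring
    rw [this, Real.sqrt_sq_eq_abs]
  rw [hsqrt, LinearMap.smul_comp, LinearMap.comp_smul, hF2, smul_smul, smul_smul]
  have habs : |a| ≠ 0 := abs_ne_zero.mpr hane
  have : |a|⁻¹ * |a|⁻¹ * -(a * a) = -1 := by
    rw [← abs_mul_abs_self a]
    field_simp
  rw [this]
  ext v
  simp
end

section
/- Let Ω be a closed 2-form on a manifold M, X a vector field with ι_X Ω = dH for a smooth function H, R a vector field, and θ̄ a 1-form with Ω = −dθ̄ and L_R θ̄ = 0. Define μ = ι_R θ̄. Then L_X μ = −L_R H. In particular, if L_R H = 0 then μ is a conserved quantity of X. -/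
/-- Adiabatic-invariant construction (flat-chart formalization): with
`Ω = -dθ̄`, `ι_X Ω = dH`, `L_R θ̄ = 0`, and `μ = ι_R θ̄`, one has
`L_X μ = -L_R H`; in particular, if `L_R H = 0` then `μ` is conserved by `X`. -/
theorem stmt_15 {E : Type*} [NormedAddCommGroup E] [NormedSpace ℝ E]
    (θb : E → E →L[ℝ] ℝ) (X R : E → E) (H : E → ℝ)
    (hθsmooth : ContDiff ℝ (⊤ : ℕ∞) θb) (hXsmooth : ContDiff ℝ (⊤ : ℕ∞) X)
    (hRsmooth : ContDiff ℝ (⊤ : ℕ∞) R) (hHsmooth : ContDiff ℝ (⊤ : ℕ∞) H)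
    (hHam : ∀ m v, -((fderiv ℝ θb m (X m)) v - (fderiv ℝ θb m v) (X m))
      = fderiv ℝ H m v)
    (hLieθ : ∀ m v, (fderiv ℝ θb m (R m)) v + θb m ((fderiv ℝ R m) v) = 0) :
    (∀ m, fderiv ℝ (fun p => θb p (R p)) m (X m) = -(fderiv ℝ H m (R m))) ∧
    ((∀ m, fderiv ℝ H m (R m) = 0) →
      ∀ m, fderiv ℝ (fun p => θb p (R p)) m (X m) = 0) := by
  have key : ∀ m, fderiv ℝ (fun p => θb p (R p)) m (X m) = -(fderiv ℝ H m (R m)) := by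
    intro m
    have hθd : DifferentiableAt ℝ θb m := (hθsmooth.differentiable (by simp)) m
    have hRd : DifferentiableAt ℝ R m := (hRsmooth.differentiable (by simp)) m
    rw [fderiv_clm_apply hθd hRd]
    have h1 := hLieθ m (X m)
    have h2 := hHam m (R m)
    simp only [ContinuousLinearMap.add_apply, ContinuousLinearMap.coe_comp',
      Function.comp_apply, ContinuousLinearMap.flip_apply]
    linarith
  exact ⟨key, fun h m => by rw [key m, h m, neg_zero]⟩
end
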